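/- Let tm be the Thue–Morse word (fixed point starting with 0 of 0↦01, 1↦10) and τ the letterwise map τ(0)=01⋄, τ(1)=02⋄ to partial words over {0,1,2,⋄}. Then w = τ(tm) contains no cube: there exist no j and n ≥ 1 such that for all i < n, the three positions w[j+i], w[j+n+i], w[j+2n+i] are pairwise compatible in the sense that any two of them which are both letters are equal. -/

import Mathlib

/-- The Thue–Morse morphism 0 ↦ 01, 1 ↦ 10. -/
def tmImg : ℕ → List ℕ
  | 0 => [0, 1]
  | _ => [1, 0]

/-- The Thue–Morse word: fixed point starting with 0. -/
def tm (n : ℕ) : ℕ := ((fun l => l.flatMap tmImg)^[n+1] [0]).getD n 0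

/-- τ(0)=01⋄, τ(1)=02⋄, with the hole ⋄ encoded as 3. -/
def tauImg : ℕ → List ℕ
  | 0 => [0, 1, 3]
  | _ => [0, 2, 3]

/-- The infinite partial word τ(tm), over {0,1,2} with hole encoded as 3. -/
def w (n : ℕ) : ℕ := (tauImg (tm (n / 3))).getD (n % 3) 0

/-- Two symbols are compatible if they are equal or one is the hole. -/
def compat (a b : ℕ) : Prop := a = b ∨ a = 3 ∨ b = 3

/-! ### auxiliary -/

def LTM (k : ℕ) : List ℕ := (fun l => l.flatMap tmImg)^[k] [0]

lemma LTM_succ (k : ℕ) : LTM (k+1) = (LTM k).flatMap tmImg := by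
  simp [LTM, Function.iterate_succ_apply']

lemma tmImg_length (a : ℕ) : (tmImg a).length = 2 := by
  cases a <;> simp [tmImg]

lemma flatMap_length (l : List ℕ) : (l.flatMap tmImg).length = 2 * l.length := by
  induction l with
  | nil => simp
  | cons a l ih => simp [List.flatMap_cons, ih, tmImg_length]; ring

lemma LTM_length (k : ℕ) : (LTM k).length = 2 ^ k := by
  induction k with
  | zero => simp [LTM]
  | succ k ih => rw [LTM_succ, flatMap_length, ih]; ring

lemma LTM_prefix (k : ℕ) : LTM k <+: LTM (k+1) := by
  induction k with
  | zero => exact ⟨[1], rfl⟩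
  | succ k ih =>
    obtain ⟨t, ht⟩ := ih
    exact ⟨t.flatMap tmImg, by rw [LTM_succ, LTM_succ, ← ht, List.flatMap_append]⟩

lemma LTM_prefix_le {k k' : ℕ} (h : k ≤ k') : LTM k <+: LTM k' := by
  induction k' with
  | zero => simp_all
  | succ k' ih =>
    rcases Nat.lt_or_ge k (k'+1) with h' | h'
    · exact (ih (by omega)).trans (LTM_prefix k')
    · have : k = k' + 1 := by omega
      subst this; exact List.prefix_refl _

lemma getD_of_prefix {l l' : List ℕ} (h : l <+: l') {n : ℕ} (hn : n < l.length) :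
    l'.getD n 0 = l.getD n 0 := by
  obtain ⟨t, ht⟩ := h
  rw [← ht, List.getD_append _ _ _ _ hn]

lemma tm_eq_LTM {k n : ℕ} (h : n < 2 ^ k) : tm n = (LTM k).getD n 0 := by
  have hn : n < 2 ^ (n+1) := lt_of_lt_of_le (Nat.lt_two_pow_self (n := n)) (Nat.pow_le_pow_right (by norm_num) (by omega))
  rcases Nat.le_total (n+1) k with h' | h'
  · rw [tm, show ((fun l => l.flatMap tmImg)^[n+1] [0]) = LTM (n+1) from rfl,
      getD_of_prefix (LTM_prefix_le h') (by rw [LTM_length]; exact hn)]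
  · rw [tm, show ((fun l => l.flatMap tmImg)^[n+1] [0]) = LTM (n+1) from rfl,
      getD_of_prefix (l := LTM k) (LTM_prefix_le h') (by rw [LTM_length]; exact h)]

lemma LTM_mem {k : ℕ} : ∀ x ∈ LTM k, x ≤ 1 := by
  induction k with
  | zero => simp [LTM]
  | succ k ih =>
    rw [LTM_succ]
    intro x hx
    rw [List.mem_flatMap] at hx
    obtain ⟨a, _, hxa⟩ := hx
    cases a <;> simp [tmImg] at hxa <;> omega

lemma tm_le (n : ℕ) : tm n ≤ 1 := by
  have hlt : n < (LTM (n+1)).length := by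
    rw [LTM_length]
    exact lt_of_lt_of_le (Nat.lt_two_pow_self (n := n)) (Nat.pow_le_pow_right (by norm_num) (by omega))
  have h := tm_eq_LTM (k := n+1) (by rw [LTM_length] at hlt; exact hlt)
  rw [h, List.getD_eq_getElem _ _ hlt]
  exact LTM_mem _ (List.getElem_mem _)

lemma flatMap_getD {l : List ℕ} (hl : ∀ x ∈ l, x ≤ 1) {i : ℕ} (hi : i < l.length) :
    (l.flatMap tmImg).getD (2*i) 0 = l.getD i 0 ∧
    (l.flatMap tmImg).getD (2*i+1) 0 = 1 - l.getD i 0 := by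
  induction l generalizing i with
  | nil => simp at hi
  | cons a l ih =>
    rw [List.flatMap_cons]
    have ha : a ≤ 1 := hl a (by simp)
    cases i with
    | zero =>
      have h2 : (2:ℕ)*0 = 0 := rfl
      have hlen : (tmImg a).length = 2 := tmImg_length a
      constructor
      · rw [h2, List.getD_append _ _ _ _ (by omega)]
        interval_cases a <;> simp [tmImg]
      · rw [h2, List.getD_append _ _ _ _ (by omega)]
        interval_cases a <;> simp [tmImg]
    | succ i =>
      have hi' : i < l.length := by simpa using hi
      have hl' : ∀ x ∈ l, x ≤ 1 := fun x hx => hl x (by simp [hx])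
      have e1 : 2*(i+1) = (tmImg a).length + 2*i := by rw [tmImg_length]; ring
      have e2 : 2*(i+1)+1 = (tmImg a).length + (2*i+1) := by rw [tmImg_length]; ring
      constructor
      · rw [e1, List.getD_append_right _ _ _ _ (by omega), Nat.add_sub_cancel_left]
        simpa using (ih hl' hi').1
      · rw [e2, List.getD_append_right _ _ _ _ (by omega), Nat.add_sub_cancel_left]
        simpa using (ih hl' hi').2

lemma tm_rec (n : ℕ) : tm (2*n) = tm n ∧ tm (2*n+1) = 1 - tm n := by
  have hn : n < 2 ^ n := Nat.lt_two_pow_self (n := n)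
  have h1 : 2*n < 2 ^ (n+1) := by rw [pow_succ]; omega
  have h2 : 2*n+1 < 2 ^ (n+1) := by rw [pow_succ]; omega
  have key := flatMap_getD (l := LTM n) LTM_mem (i := n) (by rw [LTM_length]; exact hn)
  rw [← LTM_succ] at key
  rw [tm_eq_LTM h1, tm_eq_LTM h2, tm_eq_LTM hn, key.1, key.2]
  exact ⟨rfl, rfl⟩

lemma tm_pair (n : ℕ) : tm (2*n) + tm (2*n+1) = 1 := by
  have := tm_rec n
  have := tm_le n
  omega

/-! ### Thue–Morse is overlap-free -/

lemma no_overlap : ∀ n, 1 ≤ n → ∀ k, (∀ r, r ≤ n → tm (k + r) = tm (k + n + r)) → False := by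
  intro n
  induction n using Nat.strong_induction_on with
  | _ n ih =>
    intro hn k H
    rcases Nat.even_or_odd n with ⟨m, hm⟩ | ⟨m, hm⟩
    · -- n = m + m, even case, reduce to order m
      have hm1 : 1 ≤ m := by omega
      rcases Nat.even_or_odd k with ⟨a, ha⟩ | ⟨a, ha⟩
      · refine ih m (by omega) hm1 a ?_
        intro r hr
        have h1 := H (2*r) (by omega)
        have e1 : k + 2*r = 2*(a+r) := by omega
        have e2 : k + n + 2*r = 2*(a+m+r) := by omega
        rw [e1, e2, (tm_rec (a+r)).1, (tm_rec (a+m+r)).1] at h1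
        exact h1
      · refine ih m (by omega) hm1 a ?_
        intro r hr
        have h1 := H (2*r) (by omega)
        have e1 : k + 2*r = 2*(a+r)+1 := by omega
        have e2 : k + n + 2*r = 2*(a+m+r)+1 := by omega
        rw [e1, e2, (tm_rec (a+r)).2, (tm_rec (a+m+r)).2] at h1
        have := tm_le (a+r); have := tm_le (a+m+r)
        omega
    · -- n = 2m+1, odd case
      have claim : ∀ r, r < n → tm (k+r) + tm (k+r+1) = 1 := by
        intro r hr
        rcases Nat.even_or_odd (k+r) with ⟨b, hb⟩ | ⟨b, hb⟩
        · have := tm_pair b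
          have e1 : k + r = 2*b := by omega
          have e2 : k + r + 1 = 2*b+1 := by omega
          rw [e1]; omega
        · -- k+r odd, so k+r+n even
          have h1 := H r (by omega)
          have h2 := H (r+1) (by omega)
          have hb2 : k + r + n = 2*(b+m+1) := by omega
          have := tm_pair (b+m+1)
          have e1 : k + n + r = 2*(b+m+1) := by omega
          have e2 : k + n + (r+1) = 2*(b+m+1)+1 := by omega
          rw [e1] at h1
          rw [e2] at h2
          have e3 : k + (r+1) = k + r + 1 := by omega
          rw [e3] at h2
          omega
      have alt : ∀ r, r ≤ n → tm (k+r) = (tm k + r) % 2 := by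
        intro r hr
        induction r with
        | zero => have := tm_le k; simpa using by omega
        | succ r ihr =>
          have h1 := ihr (by omega)
          have h2 := claim r (by omega)
          have e : k + (r+1) = k + r + 1 := by omega
          rw [e]
          have := tm_le (k+r)
          have := tm_le (k+r+1)
          omega
      have h0 := H 0 (by omega)
      have hA := alt n (le_refl n)
      have e0 : k + n + 0 = k + n := by omega
      have e1 : k + 0 = k := by omega
      rw [e0, e1] at h0
      have := tm_le k
      omega

/-! ### structure of w -/

lemma tauImg_getD0 (a : ℕ) : (tauImg a).getD 0 0 = 0 := by cases a <;> simp [tauImg]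
lemma tauImg_getD2 (a : ℕ) : (tauImg a).getD 2 0 = 3 := by cases a <;> simp [tauImg]

lemma w_mod0 {p : ℕ} (h : p % 3 = 0) : w p = 0 := by
  rw [w, h, tauImg_getD0]

lemma w_mod2 {p : ℕ} (h : p % 3 = 2) : w p = 3 := by
  rw [w, h, tauImg_getD2]

lemma w31 (k : ℕ) : w (3*k+1) = tm k + 1 := by
  have h1 : (3*k+1) / 3 = k := by omega
  have h2 : (3*k+1) % 3 = 1 := by omega
  rw [w, h1, h2]
  have := tm_le k
  interval_cases h : tm k <;> simp [tauImg]

lemma w_mod1 {p : ℕ} (h : p % 3 = 1) : w p = 1 ∨ w p = 2 := by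
  have e : p = 3*(p/3)+1 := by omega
  rw [e, w31]
  have := tm_le (p/3)
  omega

lemma no01 {a b : ℕ} (ha : a % 3 = 0) (hb : b % 3 = 1) :
    ¬ compat (w a) (w b) ∧ ¬ compat (w b) (w a) := by
  have h1 := w_mod0 ha
  have h2 := w_mod1 hb
  unfold compat
  omega

/-- τ(tm) contains no cube: for no order n ≥ 1 and position j are the three symbols
w[j+i], w[j+n+i], w[j+2n+i] pairwise compatible for all i < n. -/
theorem stmt16 :
    ¬ ∃ j n : ℕ, 1 ≤ n ∧ ∀ i, i < n →
      (compat (w (j+i)) (w (j+n+i)) ∧ compat (w (j+n+i)) (w (j+2*n+i)) ∧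
        compat (w (j+i)) (w (j+2*n+i))) := by
  rintro ⟨j, n, hn, H⟩
  rcases Nat.lt_or_ge (n % 3) 1 with h3 | h3
  · -- n = 3m
    have hm : n = 3 * (n / 3) := by omega
    set m := n / 3 with hmd
    have hm1 : 1 ≤ m := by omega
    set k0 := (j + 1) / 3 with hk0
    have hk0a : 3 * k0 ≤ j + 1 := by omega
    have hk0b : j ≤ 3 * k0 + 1 := by omega
    have key : ∀ k, k0 ≤ k → k < k0 + m → tm k = tm (k+m) ∧ tm k = tm (k+2*m) := by
      intro k hk1 hk2
      have hi : 3*k+1 - j < n ∧ j + (3*k+1-j) = 3*k+1 := by omega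
      obtain ⟨c1, c2, c3⟩ := H (3*k+1-j) hi.1
      have e1 : j + (3*k+1-j) = 3*k+1 := hi.2
      have e2 : j + n + (3*k+1-j) = 3*(k+m)+1 := by omega
      have e3 : j + 2*n + (3*k+1-j) = 3*(k+2*m)+1 := by omega
      rw [e1, e2] at c1
      rw [e1, e3] at c3
      rw [w31, w31] at c1 c3
      have := tm_le k; have := tm_le (k+m); have := tm_le (k+2*m)
      unfold compat at c1 c3
      omega
    refine no_overlap m hm1 k0 ?_
    intro r hr
    rcases Nat.lt_or_ge r m with hrm | hrm
    · have h := (key (k0+r) (by omega) (by omega)).1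
      have e : k0 + r + m = k0 + m + r := by omega
      rw [e] at h
      exact h
    · have hrm' : r = m := by omega
      subst hrm'
      have h1 := (key k0 (le_refl _) (by omega)).1
      have h2 := (key k0 (le_refl _) (by omega)).2
      have e : k0 + 2*m = k0 + m + m := by omega
      rw [e] at h2
      omega
  · -- n % 3 = 1 or 2
    obtain ⟨c1, c2, c3⟩ := H 0 (by omega)
    simp only [Nat.add_zero] at c1 c2 c3
    have hj : j % 3 = 0 ∨ j % 3 = 1 ∨ j % 3 = 2 := by omega
    have hn3 : n % 3 = 1 ∨ n % 3 = 2 := by omega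
    rcases hj with hj | hj | hj <;> rcases hn3 with hn3 | hn3
    · exact (no01 (a := j) (b := j+n) (by omega) (by omega)).1 c1
    · exact (no01 (a := j) (b := j+2*n) (by omega) (by omega)).1 c3
    · exact (no01 (a := j+2*n) (b := j) (by omega) (by omega)).2 c3
    · exact (no01 (a := j+n) (b := j) (by omega) (by omega)).2 c1
    · exact (no01 (a := j+n) (b := j+2*n) (by omega) (by omega)).1 c2
    · exact (no01 (a := j+2*n) (b := j+n) (by omega) (by omega)).2 c2
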